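/- S(λ) = (H·λ)^{s′} is the gradient (with respect to the Frobenius inner product on harmonic fourth-order tensors) of the function H ↦ (1/2) λ : d₂'(H), where d₂(H)_{ij} = H_{ipqr}H_{pqrj} and d₂' is its deviator; i.e., for all harmonic fourth-order δH, d/dt|₀ (1/2)λ:d₂'(H+t δH) = S(λ) :: δH. -/

import Mathlib

/-- Fourth-order tensors on `ℝ³`. -/
abbrev T4 := Fin 3 → Fin 3 → Fin 3 → Fin 3 → ℝ

/-- Kronecker delta on `Fin 3`. -/
noncomputable def kd (i j : Fin 3) : ℝ := if i = j then 1 else 0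

/-- Total symmetrization of a fourth-order tensor. -/
noncomputable def tsym (T : T4) : T4 := fun i j k l =>
  (∑ σ : Equiv.Perm (Fin 4),
    T (![i, j, k, l] (σ 0)) (![i, j, k, l] (σ 1))
      (![i, j, k, l] (σ 2)) (![i, j, k, l] (σ 3))) / 24

/-- Symmetrized tensor product `Id ⊙ a` of the identity with a symmetric
second-order tensor `a`. -/
noncomputable def idSym (a : Fin 3 → Fin 3 → ℝ) : T4 := fun i j k l =>
  (kd i j * a k l + kd i k * a j l + kd i l * a j k
    + kd k l * a i j + kd j l * a i k + kd j k * a i l) / 6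

/-- `H` is totally symmetric. -/
def TotSymm (H : T4) : Prop :=
  ∀ i j k l, H i j k l = H j i k l ∧ H i j k l = H i k j l ∧
    H i j k l = H i j l k ∧ H i j k l = H k l i j

/-- `H` is traceless. -/
def Traceless4 (H : T4) : Prop := ∀ k l, ∑ i : Fin 3, H i i k l = 0

/-- The double contraction `(H : λ)_{ij} = H_{ijkl} λ_{kl}`. -/
def dc (H : T4) (lam : Fin 3 → Fin 3 → ℝ) : Fin 3 → Fin 3 → ℝ :=
  fun i j => ∑ k : Fin 3, ∑ l : Fin 3, H i j k l * lam k l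

/-- The tensor with components `H_{ijkp} λ_{pl}`. -/
def mulR (H : T4) (lam : Fin 3 → Fin 3 → ℝ) : T4 :=
  fun i j k l => ∑ p : Fin 3, H i j k p * lam p l

/-- `S(λ) = (H·λ)^s − (3/7) Id ⊙ (H:λ)`. -/
noncomputable def Sten (H : T4) (lam : Fin 3 → Fin 3 → ℝ) : T4 := fun i j k l =>
  tsym (mulR H lam) i j k l - (3 / 7) * idSym (dc H lam) i j k l

/-- The quadratic covariant `d₂(H)_{ij} = H_{ipqr} H_{pqrj}`. -/
def d2 (H : T4) : Fin 3 → Fin 3 → ℝ := fun i j =>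
  ∑ p : Fin 3, ∑ q : Fin 3, ∑ r : Fin 3, H i p q r * H p q r j

/-- Deviatoric part of a second-order tensor. -/
noncomputable def dev (a : Fin 3 → Fin 3 → ℝ) : Fin 3 → Fin 3 → ℝ := fun i j =>
  a i j - (∑ k : Fin 3, a k k) / 3 * kd i j

/-!
Along the line `H + t δH`, `d₂` is quadratic in `t` with linear coefficient
`H·δH + δH·H` (contraction over three indices). Since `tr λ = 0` the deviator drops out of
`λ : d₂'`, and the symmetries of `H`, `δH` and `λ` identify both halves of `λ : (H·δH + δH·H)`
with `(H·λ) :: δH`.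

On the other side, a totally symmetric `δH` is invariant under every permutation of its index
slots, because the adjacent transpositions generate `S₄`. Hence contracting `δH` with the
symmetrization `(H·λ)^s` is the same as contracting it with `H·λ`, and each of the six terms of
`Id ⊙ (H:λ)` is a permuted copy of `Id ⊗ (H:λ)`, whose contraction with `δH` is a trace of `δH`
and vanishes.
-/

theorem sum_pi_fin_four {α M : Type*} [Fintype α] [AddCommMonoid M] (f : α → α → α → α → M) :
    ∑ v : Fin 4 → α, f (v 0) (v 1) (v 2) (v 3) = ∑ i, ∑ j, ∑ k, ∑ l, f i j k l := by
  simp only [← (Fin.consEquiv fun _ => α).sum_comp, Fintype.sum_prod_type, Fintype.sum_unique]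
  rfl

def T4.uncurry (T : T4) (v : Fin 4 → Fin 3) : ℝ := T (v 0) (v 1) (v 2) (v 3)

theorem sum_mul_eq_sum_uncurry_mul (T U : T4) :
    ∑ i, ∑ j, ∑ k, ∑ l, T i j k l * U i j k l = ∑ v, T.uncurry v * U.uncurry v :=
  (sum_pi_fin_four fun i j k l => T i j k l * U i j k l).symm

namespace TotSymm

variable {T : T4}

theorem cycle (hT : TotSymm T) (i j k l : Fin 3) : T i j k l = T j k l i := by
  rw [(hT i j k l).1, (hT j i k l).2.1, (hT j k i l).2.2.1]

theorem uncurry_comp_perm (hT : TotSymm T) (σ : Equiv.Perm (Fin 4)) (v : Fin 4 → Fin 3) :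
    T.uncurry (v ∘ σ) = T.uncurry v := by
  let stab : Submonoid (Equiv.Perm (Fin 4)) :=
    { carrier := {σ | ∀ v, T.uncurry (v ∘ σ) = T.uncurry v}
      mul_mem' := fun {σ τ} hσ hτ v => by
        rw [Equiv.Perm.coe_mul, ← Function.comp_assoc, hτ, hσ]
      one_mem' := fun _ => rfl }
  have hgen : Submonoid.closure (Set.range fun i : Fin 3 => Equiv.swap i.castSucc i.succ)
      ≤ stab := by
    refine Submonoid.closure_le.2 ?_
    rintro _ ⟨i, rfl⟩ v
    fin_cases i
    · exact (hT _ _ _ _).1.symm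
    · exact (hT _ _ _ _).2.1.symm
    · exact (hT _ _ _ _).2.2.1.symm
  rw [Equiv.Perm.mclosure_swap_castSucc_succ] at hgen
  exact hgen (Submonoid.mem_top σ) v

theorem sum_comp_perm_mul_uncurry (hT : TotSymm T) (X : (Fin 4 → Fin 3) → ℝ)
    (σ : Equiv.Perm (Fin 4)) :
    ∑ v, X (v ∘ σ) * T.uncurry v = ∑ v, X v * T.uncurry v :=
  calc ∑ v, X (v ∘ σ) * T.uncurry v = ∑ v, X (v ∘ σ) * T.uncurry (v ∘ σ) := by
        simp only [hT.uncurry_comp_perm]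
    _ = ∑ v, X v * T.uncurry v :=
        (σ.symm.arrowCongr (Equiv.refl (Fin 3))).sum_comp fun v => X v * T.uncurry v

end TotSymm

theorem tsym_uncurry (T : T4) (v : Fin 4 → Fin 3) :
    (tsym T).uncurry v = (∑ σ : Equiv.Perm (Fin 4), T.uncurry (v ∘ σ)) / 24 := by
  have hv : ![v 0, v 1, v 2, v 3] = v := by funext i; fin_cases i <;> rfl
  simp only [T4.uncurry, tsym, hv, Function.comp_apply]

theorem TotSymm.sum_tsym_mul {U : T4} (hU : TotSymm U) (T : T4) :
    ∑ i, ∑ j, ∑ k, ∑ l, tsym T i j k l * U i j k l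
      = ∑ i, ∑ j, ∑ k, ∑ l, T i j k l * U i j k l := by
  simp only [sum_mul_eq_sum_uncurry_mul, tsym_uncurry, div_mul_eq_mul_div, ← Finset.sum_div,
    Finset.sum_mul]
  rw [Finset.sum_comm]
  simp only [hU.sum_comp_perm_mul_uncurry, Finset.sum_const, Finset.card_univ,
    Fintype.card_perm, Fintype.card_fin]
  norm_num [Nat.factorial]

noncomputable def idTensor (a : Fin 3 → Fin 3 → ℝ) : T4 := fun i j k l => kd i j * a k l

theorem Traceless4.sum_idTensor_mul {U : T4} (hU : Traceless4 U) (a : Fin 3 → Fin 3 → ℝ) :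
    ∑ v, (idTensor a).uncurry v * U.uncurry v = 0 := by
  rw [← sum_mul_eq_sum_uncurry_mul]
  simp only [idTensor, kd, ite_mul, one_mul, zero_mul, Finset.sum_ite_irrel,
    Finset.sum_const_zero, Finset.sum_ite_eq, Finset.mem_univ, if_true]
  rw [Finset.sum_comm]
  refine Finset.sum_eq_zero fun k _ => ?_
  rw [Finset.sum_comm]
  exact Finset.sum_eq_zero fun l _ => by rw [← Finset.mul_sum, hU k l, mul_zero]

open Equiv in
theorem idSym_uncurry (a : Fin 3 → Fin 3 → ℝ) (v : Fin 4 → Fin 3) :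
    (idSym a).uncurry v = ((idTensor a).uncurry v + (idTensor a).uncurry (v ∘ swap 1 2)
      + (idTensor a).uncurry (v ∘ ⇑(swap 2 3 * swap 1 2 : Perm (Fin 4)))
      + (idTensor a).uncurry (v ∘ ⇑(swap 0 2 * swap 1 3 : Perm (Fin 4)))
      + (idTensor a).uncurry (v ∘ ⇑(swap 2 3 * swap 1 2 * swap 0 2 : Perm (Fin 4)))
      + (idTensor a).uncurry (v ∘ ⇑(swap 1 2 * swap 0 2 : Perm (Fin 4)))) / 6 :=
  rfl

theorem sum_idSym_mul_eq_zero {U : T4} (hU : TotSymm U) (hUtr : Traceless4 U)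
    (a : Fin 3 → Fin 3 → ℝ) :
    ∑ i, ∑ j, ∑ k, ∑ l, idSym a i j k l * U i j k l = 0 := by
  simp only [sum_mul_eq_sum_uncurry_mul, idSym_uncurry, div_mul_eq_mul_div, ← Finset.sum_div,
    add_mul, Finset.sum_add_distrib, hU.sum_comp_perm_mul_uncurry, hUtr.sum_idTensor_mul]
  norm_num

theorem sum_mul_dev {lam : Fin 3 → Fin 3 → ℝ} (hltr : ∑ i, lam i i = 0)
    (a : Fin 3 → Fin 3 → ℝ) :
    ∑ i, ∑ j, lam i j * dev a i j = ∑ i, ∑ j, lam i j * a i j := by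
  simp only [dev, kd, mul_sub, Finset.sum_sub_distrib, mul_ite, mul_one, mul_zero,
    Finset.sum_ite_eq, Finset.mem_univ, if_true, ← Finset.sum_mul, hltr]
  simp

theorem hasDerivAt_d2_add_smul (H δH : T4) (i j : Fin 3) :
    HasDerivAt (fun t : ℝ => d2 (fun i' j' k' l' => H i' j' k' l' + t * δH i' j' k' l') i j)
      (∑ p, ∑ q, ∑ r, (H i p q r * δH p q r j + δH i p q r * H p q r j)) 0 := by
  have hline : ∀ x c : ℝ, HasDerivAt (fun t : ℝ => x + t * c) c 0 := fun x c => by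
    simpa using ((hasDerivAt_id (0 : ℝ)).mul_const c).const_add x
  exact HasDerivAt.fun_sum fun p _ => HasDerivAt.fun_sum fun q _ => HasDerivAt.fun_sum fun r _ =>
    ((hline _ _).fun_mul (hline _ _)).congr_deriv (by ring)

theorem TotSymm.sum_mul_contract_eq_sum_mulR_mul {H : T4} (hH : TotSymm H) (δH : T4)
    (lam : Fin 3 → Fin 3 → ℝ) :
    ∑ i, ∑ j, lam i j * ∑ p, ∑ q, ∑ r, H i p q r * δH p q r j
      = ∑ i, ∑ j, ∑ k, ∑ l, mulR H lam i j k l * δH i j k l := by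
  have hmulR : mulR H lam = fun i j k l => ∑ p, H p i j k * lam p l := by
    funext i j k l
    exact Finset.sum_congr rfl fun p _ => by rw [hH.cycle p]
  rw [hmulR]
  -- the two sides now differ only in the order of summation
  simp only [Fin.sum_univ_three]
  ring

theorem sum_mul_contract_comm {H δH : T4} (hH : TotSymm H) (hδ : TotSymm δH)
    {lam : Fin 3 → Fin 3 → ℝ} (hls : ∀ i j, lam i j = lam j i) :
    ∑ i, ∑ j, lam i j * ∑ p, ∑ q, ∑ r, δH i p q r * H p q r j
      = ∑ i, ∑ j, lam i j * ∑ p, ∑ q, ∑ r, H i p q r * δH p q r j :=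
  calc ∑ i, ∑ j, lam i j * ∑ p, ∑ q, ∑ r, δH i p q r * H p q r j
      = ∑ i, ∑ j, lam j i * ∑ p, ∑ q, ∑ r, H j p q r * δH p q r i := by
        refine Finset.sum_congr rfl fun i _ => Finset.sum_congr rfl fun j _ => ?_
        simp only [hls i j, hδ.cycle i, fun p q r => (hH.cycle j p q r).symm,
          mul_comm (δH _ _ _ _)]
    _ = _ := Finset.sum_comm

theorem Sten_is_gradient_general
    (H δH : T4) (hH : TotSymm H)
    (hδ : TotSymm δH) (hδtr : Traceless4 δH)
    (lam : Fin 3 → Fin 3 → ℝ) (hls : ∀ i j, lam i j = lam j i)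
    (hltr : ∑ i : Fin 3, lam i i = 0) :
    deriv (fun t : ℝ =>
        (1 / 2) * ∑ i : Fin 3, ∑ j : Fin 3,
          lam i j * dev (d2 (fun i' j' k' l' => H i' j' k' l' + t * δH i' j' k' l')) i j) 0
      = ∑ i : Fin 3, ∑ j : Fin 3, ∑ k : Fin 3, ∑ l : Fin 3,
          Sten H lam i j k l * δH i j k l := by
  have hderiv : HasDerivAt (fun t : ℝ =>
        (1 / 2) * ∑ i : Fin 3, ∑ j : Fin 3,
          lam i j * dev (d2 (fun i' j' k' l' => H i' j' k' l' + t * δH i' j' k' l')) i j)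
      ((1 / 2) * ∑ i, ∑ j, lam i j *
        ∑ p, ∑ q, ∑ r, (H i p q r * δH p q r j + δH i p q r * H p q r j)) 0 := by
    simp only [sum_mul_dev hltr]
    exact (HasDerivAt.fun_sum fun i _ => HasDerivAt.fun_sum fun j _ =>
      (hasDerivAt_d2_add_smul H δH i j).const_mul (lam i j)).const_mul (1 / 2)
  have hSten : ∑ i, ∑ j, ∑ k, ∑ l, Sten H lam i j k l * δH i j k l
      = ∑ i, ∑ j, ∑ k, ∑ l, mulR H lam i j k l * δH i j k l := by
    simp only [Sten, sub_mul, Finset.sum_sub_distrib, mul_assoc, ← Finset.mul_sum,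
      hδ.sum_tsym_mul, sum_idSym_mul_eq_zero hδ hδtr, mul_zero, sub_zero]
  rw [hderiv.deriv, hSten, ← hH.sum_mul_contract_eq_sum_mulR_mul δH lam]
  simp only [Finset.sum_add_distrib, mul_add, sum_mul_contract_comm hH hδ hls]
  ring

/-- `S(λ)` is the gradient of `H ↦ (1/2) λ : d₂'(H)`: for every
harmonic fourth-order direction `δH`,
`d/dt|₀ (1/2) λ : d₂'(H + t δH) = S(λ) :: δH`. -/
theorem Sten_is_gradient
    (H δH : T4) (hH : TotSymm H) (hHtr : Traceless4 H)
    (hδ : TotSymm δH) (hδtr : Traceless4 δH)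
    (lam : Fin 3 → Fin 3 → ℝ) (hls : ∀ i j, lam i j = lam j i)
    (hltr : ∑ i : Fin 3, lam i i = 0) :
    deriv (fun t : ℝ =>
        (1 / 2) * ∑ i : Fin 3, ∑ j : Fin 3,
          lam i j * dev (d2 (fun i' j' k' l' => H i' j' k' l' + t * δH i' j' k' l')) i j) 0
      = ∑ i : Fin 3, ∑ j : Fin 3, ∑ k : Fin 3, ∑ l : Fin 3,
          Sten H lam i j k l * δH i j k l :=
  Sten_is_gradient_general H δH hH hδ hδtr lam hls hltr
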